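/- arXiv:1207.2819 — 3 statements merged into one kernel-verified Lean document; each statement's English description precedes it below -/
import Mathlib

section
/- Let π be a run of a pushdown automaton with stack-size sequence (s_n) and let (i, j, k) be an N-level of π. For each stack size h with s_i ≤ h ≤ s_j, define lp(h) = max{y ≤ j : s_y = h} (last push) and fp(h) = min{y ≥ j : s_y = h} (first pop). Then i ≤ lp(h) ≤ j ≤ fp(h) ≤ k, and the topmost stack symbol at position fp(h) equals the topmost stack symbol at position lp(h). -/
/-!
In normal form every step changes the stack size by exactly one, so by the discrete
intermediate value theorem the stack passes through size `h` both in `[i, j]` and in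
`[j, k]`; this places `lp(h)` and `fp(h)`. On `[lp(h), fp(h)]` the stack size never
drops below `h`, for otherwise it would return to `h` strictly after `lp(h)` (before `j`)
or strictly before `fp(h)` (after `j`). A normal-form step that keeps the size `≥ h`
leaves the bottom `h` symbols untouched, because a push re-pushes the popped symbol.
Hence the whole stacks at `lp(h)` and `fp(h)`, both of size `h`, coincide.
-/

/-- A pushdown automaton with state type `Q`, input alphabet `A`, stack alphabet `Γ`.
A transition pops the topmost stack symbol and pushes a string of stack symbols
(head = new top). -/
structure PDA (Q A Γ : Type) where
  init : Q
  startSym : Γ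
  final : Set Q
  trans : Q → Option A → Γ → Set (Q × List Γ)

namespace PDA

variable {Q A Γ : Type}

/-- One step of the automaton: pop the top symbol `Z` and push the string `β`. -/
def Step (M : PDA Q A Γ) (c : Q × List Γ) (a : Option A) (c' : Q × List Γ) : Prop :=
  ∃ Z rest β, c.2 = Z :: rest ∧ (c'.1, β) ∈ M.trans c.1 a Z ∧ c'.2 = β ++ rest

/-- A run of length `m`: a sequence of configurations connected by steps. -/
structure Run (M : PDA Q A Γ) (m : ℕ) where
  conf : ℕ → Q × List Γ
  label : ℕ → Option A
  ok : ∀ t < m, M.Step (conf t) (label t) (conf (t + 1))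

/-- Stack size at time `t`. -/
def Run.s {M : PDA Q A Γ} {m : ℕ} (r : M.Run m) (t : ℕ) : ℕ := (r.conf t).2.length

/-- The input word read between steps `a` (inclusive) and `b` (exclusive). -/
def Run.read {M : PDA Q A Γ} {m : ℕ} (r : M.Run m) (a b : ℕ) : List A :=
  ((List.range' a (b - a)).map r.label).reduceOption

/-- The run is an accepting run for the word `w`. -/
def Run.Accepting {M : PDA Q A Γ} {m : ℕ} (r : M.Run m) (w : List A) : Prop :=
  r.conf 0 = (M.init, [M.startSym]) ∧ (r.conf m).1 ∈ M.final ∧ r.read 0 m = w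

/-- The automaton accepts `w` iff some run accepts it. -/
def Accepts (M : PDA Q A Γ) (w : List A) : Prop := ∃ m, ∃ r : M.Run m, r.Accepting w

/-- Normal form: every transition pops the top symbol and pushes either nothing or
the popped symbol together with exactly one additional symbol. -/
def NormalForm (M : PDA Q A Γ) : Prop :=
  ∀ q a Z q' β, (q', β) ∈ M.trans q a Z → β = [] ∨ ∃ Y, β = [Y, Z]

/-- `(i, j, k)` is an `N`-level of the run `r`. -/
def Run.IsLevel {M : PDA Q A Γ} {m : ℕ} (r : M.Run m) (N i j k : ℕ) : Prop :=
  i < j ∧ j < k ∧ k ≤ m ∧ r.s i = r.s k ∧ r.s j = r.s i + N ∧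
    (∀ n, i ≤ n → n ≤ j → r.s i ≤ r.s n ∧ r.s n ≤ r.s j) ∧
    (∀ n, j ≤ n → n ≤ k → r.s k ≤ r.s n ∧ r.s n ≤ r.s j)

/-- The run has an `N`-level. -/
def Run.HasLevel {M : PDA Q A Γ} {m : ℕ} (r : M.Run m) (N : ℕ) : Prop :=
  ∃ i j k, r.IsLevel N i j k

/-- The level of the run is `l`: the maximal `N` such that the run has an `N`-level. -/
def Run.LevelIs {M : PDA Q A Γ} {m : ℕ} (r : M.Run m) (l : ℕ) : Prop :=
  r.HasLevel l ∧ ∀ N, r.HasLevel N → N ≤ l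

/-- `lp(h)`: the last time `≤ j` at which the stack has size `h`. -/
noncomputable def Run.lp {M : PDA Q A Γ} {m : ℕ} (r : M.Run m) (j h : ℕ) : ℕ :=
  sSup {y | y ≤ j ∧ r.s y = h}

/-- `fp(h)`: the first time `≥ j` at which the stack has size `h`. -/
noncomputable def Run.fp {M : PDA Q A Γ} {m : ℕ} (r : M.Run m) (j h : ℕ) : ℕ :=
  sInf {y | j ≤ y ∧ r.s y = h}

/-- The full state of a stack size `h` (relative to the middle index `j` of a level):
the state at `lp(h)`, the top stack symbol at `lp(h)`, and the state at `fp(h)`. -/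
noncomputable def Run.fullState {M : PDA Q A Γ} {m : ℕ} (r : M.Run m) (j h : ℕ) : Q × Option Γ × Q :=
  ((r.conf (r.lp j h)).1, (r.conf (r.lp j h)).2.head?, (r.conf (r.fp j h)).1)

/-- Extended configuration: the state together with the top `l` stack symbols,
padded with blanks (`none`) if the stack has fewer than `l` symbols. -/
def Run.extConf {M : PDA Q A Γ} {m : ℕ} (r : M.Run m) (l t : ℕ) : Q × List (Option Γ) :=
  ((r.conf t).1, ((r.conf t).2.map some ++ List.replicate l none).take l)

end PDA

/-- `n`-fold concatenation of a word. -/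
def wpow {A : Type} (v : List A) (n : ℕ) : List A := (List.replicate n v).flatten

theorem Nat.exists_mem_Icc_eq_of_succ_le_add_one (f : ℕ → ℕ) {a b h : ℕ} (hab : a ≤ b)
    (hstep : ∀ t, a ≤ t → t < b → f (t + 1) ≤ f t + 1)
    (ha : f a ≤ h) (hb : h ≤ f b) : ∃ y, a ≤ y ∧ y ≤ b ∧ f y = h := by
  induction b, hab using Nat.le_induction with
  | base => exact ⟨a, le_rfl, le_rfl, le_antisymm ha hb⟩
  | succ b hab ih =>
    by_cases hhb : h ≤ f b
    · obtain ⟨y, hay, hyb, hy⟩ := ih (fun t hat htb => hstep t hat (by omega)) hhb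
      exact ⟨y, hay, by omega, hy⟩
    · exact ⟨b + 1, by omega, le_rfl, by have := hstep b hab (by omega); omega⟩

theorem Nat.exists_mem_Icc_eq_of_le_succ_add_one (f : ℕ → ℕ) {a b h : ℕ} (hab : a ≤ b)
    (hstep : ∀ t, a ≤ t → t < b → f t ≤ f (t + 1) + 1)
    (hb : f b ≤ h) (ha : h ≤ f a) : ∃ y, a ≤ y ∧ y ≤ b ∧ f y = h := by
  induction b, hab using Nat.le_induction with
  | base => exact ⟨a, le_rfl, le_rfl, le_antisymm hb ha⟩
  | succ b hab ih =>
    by_cases hhb : f b ≤ h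
    · obtain ⟨y, hay, hyb, hy⟩ := ih (fun t hat htb => hstep t hat (by omega)) hhb
      exact ⟨y, hay, by omega, hy⟩
    · exact ⟨b + 1, by omega, le_rfl, by have := hstep b hab (by omega); omega⟩

namespace PDA

variable {Q A Γ : Type} {M : PDA Q A Γ}

theorem NormalForm.length_step (hnf : M.NormalForm) {c c' : Q × List Γ} {a : Option A}
    (hstep : M.Step c a c') :
    c'.2.length = c.2.length + 1 ∨ c.2.length = c'.2.length + 1 := by
  obtain ⟨Z, rest, β, hc, hβ, hc'⟩ := hstep
  rcases hnf _ _ _ _ _ hβ with rfl | ⟨Y, rfl⟩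
  · right; simp [hc, hc']
  · left; simp [hc, hc']

theorem NormalForm.drop_step (hnf : M.NormalForm) {c c' : Q × List Γ} {a : Option A}
    (hstep : M.Step c a c') {h : ℕ} (hc : h ≤ c.2.length) (hc' : h ≤ c'.2.length) :
    c'.2.drop (c'.2.length - h) = c.2.drop (c.2.length - h) := by
  obtain ⟨Z, rest, β, hcZ, hβ, hcβ⟩ := hstep
  rw [hcZ] at hc ⊢
  rw [hcβ] at hc' ⊢
  rcases hnf _ _ _ _ _ hβ with rfl | ⟨Y, rfl⟩
  · simp only [List.length_cons, List.nil_append] at hc hc' ⊢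
    rw [show rest.length + 1 - h = rest.length - h + 1 by omega, List.drop_succ_cons]
  · simp only [List.length_cons, List.cons_append, List.nil_append] at hc hc' ⊢
    rw [show rest.length + 1 + 1 - h = rest.length + 1 - h + 1 by omega, List.drop_succ_cons]

namespace Run

variable {m : ℕ} (r : M.Run m)

theorem s_succ_le (hnf : M.NormalForm) {t : ℕ} (ht : t < m) : r.s (t + 1) ≤ r.s t + 1 := by
  have := hnf.length_step (r.ok t ht)
  unfold s; omega

theorem s_le_s_succ_add_one (hnf : M.NormalForm) {t : ℕ} (ht : t < m) :
    r.s t ≤ r.s (t + 1) + 1 := by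
  have := hnf.length_step (r.ok t ht)
  unfold s; omega

theorem lp_le {j h : ℕ} (hex : ∃ y ≤ j, r.s y = h) : r.lp j h ≤ j :=
  (Nat.sSup_mem hex ⟨j, fun _ hy => hy.1⟩).1

theorem s_lp {j h : ℕ} (hex : ∃ y ≤ j, r.s y = h) : r.s (r.lp j h) = h :=
  (Nat.sSup_mem hex ⟨j, fun _ hy => hy.1⟩).2

theorem le_lp {j h y : ℕ} (hyj : y ≤ j) (hy : r.s y = h) : y ≤ r.lp j h :=
  le_csSup ⟨j, fun _ hx => hx.1⟩ ⟨hyj, hy⟩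

theorem le_fp {j h : ℕ} (hex : ∃ y, j ≤ y ∧ r.s y = h) : j ≤ r.fp j h :=
  (Nat.sInf_mem hex).1

theorem s_fp {j h : ℕ} (hex : ∃ y, j ≤ y ∧ r.s y = h) : r.s (r.fp j h) = h :=
  (Nat.sInf_mem hex).2

theorem fp_le {j h y : ℕ} (hjy : j ≤ y) (hy : r.s y = h) : r.fp j h ≤ y :=
  Nat.sInf_le ⟨hjy, hy⟩

theorem le_s_of_lp_le (hnf : M.NormalForm) {j h t : ℕ} (hjm : j ≤ m) (hh : h ≤ r.s j)
    (hlp : r.lp j h ≤ t) (htj : t ≤ j) : h ≤ r.s t := by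
  by_contra! hlt
  obtain ⟨y, hty, hyj, hy⟩ := Nat.exists_mem_Icc_eq_of_succ_le_add_one r.s htj
    (fun u _ hu => r.s_succ_le hnf (by omega)) hlt.le hh
  have := r.le_lp hyj hy
  obtain rfl : y = t := by omega
  omega

theorem le_s_of_le_fp (hnf : M.NormalForm) {j h t : ℕ} (hh : h ≤ r.s j) (hjt : j ≤ t)
    (hfp : t ≤ r.fp j h) (htm : t ≤ m) : h ≤ r.s t := by
  by_contra! hlt
  obtain ⟨y, hjy, hyt, hy⟩ := Nat.exists_mem_Icc_eq_of_le_succ_add_one r.s hjt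
    (fun u _ hu => r.s_le_s_succ_add_one hnf (by omega)) hlt.le hh
  have := r.fp_le hjy hy
  obtain rfl : y = t := by omega
  omega

theorem drop_eq_of_forall_le_s (hnf : M.NormalForm) {a b h : ℕ} (hab : a ≤ b) (hbm : b ≤ m)
    (hs : ∀ t, a ≤ t → t ≤ b → h ≤ r.s t) :
    (r.conf b).2.drop (r.s b - h) = (r.conf a).2.drop (r.s a - h) := by
  induction b, hab using Nat.le_induction with
  | base => rfl
  | succ b hab ih =>
    rw [← ih (by omega) (fun t hat htb => hs t hat (by omega))]
    exact hnf.drop_step (r.ok b (by omega)) (hs b hab (by omega)) (hs (b + 1) (by omega) le_rfl)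

end Run

end PDA

/-- For an `N`-level `(i, j, k)` and any stack size `h` with `s i ≤ h ≤ s j`,
the last push `lp(h)` and first pop `fp(h)` satisfy `i ≤ lp(h) ≤ j ≤ fp(h) ≤ k`,
and the topmost stack symbols at `lp(h)` and `fp(h)` coincide. -/
theorem lp_fp_properties {Q A Γ : Type} {M : PDA Q A Γ} {m : ℕ}
    (hnf : M.NormalForm) (r : M.Run m) {N i j k : ℕ} (hlev : r.IsLevel N i j k)
    {h : ℕ} (hg : r.s i ≤ h) (hh : h ≤ r.s j) :
    i ≤ r.lp j h ∧ r.lp j h ≤ j ∧ j ≤ r.fp j h ∧ r.fp j h ≤ k ∧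
      (r.conf (r.lp j h)).2.head? = (r.conf (r.fp j h)).2.head? := by
  obtain ⟨hij, hjk, hkm, hik, -, -, -⟩ := hlev
  obtain ⟨y₁, hiy₁, hy₁j, hy₁⟩ := Nat.exists_mem_Icc_eq_of_succ_le_add_one r.s hij.le
    (fun t _ ht => r.s_succ_le hnf (by omega)) hg hh
  obtain ⟨y₂, hjy₂, hy₂k, hy₂⟩ := Nat.exists_mem_Icc_eq_of_le_succ_add_one r.s hjk.le
    (fun t _ ht => r.s_le_s_succ_add_one hnf (by omega)) (by omega) hh
  have hlp_j : r.lp j h ≤ j := r.lp_le ⟨y₁, hy₁j, hy₁⟩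
  have hj_fp : j ≤ r.fp j h := r.le_fp ⟨y₂, hjy₂, hy₂⟩
  have hfp_k : r.fp j h ≤ k := (r.fp_le hjy₂ hy₂).trans hy₂k
  have hstack : (r.conf (r.fp j h)).2 = (r.conf (r.lp j h)).2 := by
    have := r.drop_eq_of_forall_le_s hnf (hlp_j.trans hj_fp) (by omega) fun t hlpt htfp =>
      if htj : t ≤ j then r.le_s_of_lp_le hnf (by omega) hh hlpt htj
      else r.le_s_of_le_fp hnf hh (by omega) htfp (by omega)
    rwa [r.s_fp ⟨y₂, hjy₂, hy₂⟩, r.s_lp ⟨y₁, hy₁j, hy₁⟩, Nat.sub_self, List.drop_zero,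
      List.drop_zero] at this
  exact ⟨hiy₁.trans (r.le_lp hy₁j hy₁), hlp_j, hj_fp, hfp_k, by rw [hstack]⟩
end

section
/- Let A be a pushdown automaton in normal form and π an accepting run for w containing an N-level (i,j,k), with two stack sizes g < h in [s_i, s_j] having equal full states. Factor w = uvxyz at positions lp(g), lp(h), fp(h), fp(g) of π. Then for every n ≥ 0, the word u v^n x y^n z is accepted by A. -/
/-!
The segments of the run between `lp(g)` and `lp(h)` and between `fp(h)` and `fp(g)` never dig
below the `g` bottom stack symbols `α`, and the segment between `lp(h)` and `fp(h)` never digs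
below the `h` bottom symbols `δ ++ α`. In normal form a segment whose stack stays above a fixed
bottom never reads it except for its top symbol, so it can be replayed on any other bottom with
the same top. Equality of the full states then lets the first segment be replayed from
`δⁿ ++ α` to `δⁿ⁺¹ ++ α`, the middle one on `δⁿ ++ α`, and the last one from `δⁿ⁺¹ ++ α` to
`δⁿ ++ α`; chaining these gives an accepting run for `u vⁿ x yⁿ z`.
-/

theorem wpow_zero {A : Type} (v : List A) : wpow v 0 = [] := rfl

theorem wpow_succ {A : Type} (v : List A) (n : ℕ) : wpow v (n + 1) = wpow v n ++ v := by
  simp [wpow, List.replicate_succ']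

theorem wpow_succ' {A : Type} (v : List A) (n : ℕ) : wpow v (n + 1) = v ++ wpow v n := by
  simp [wpow, List.replicate_succ]

theorem head?_wpow_append {A : Type} {δ α : List A} (h : (δ ++ α).head? = α.head?) (n : ℕ) :
    (wpow δ n ++ α).head? = α.head? := by
  induction n with
  | zero => rfl
  | succ n ih =>
    rw [wpow_succ', List.append_assoc, List.head?_append, ih, ← List.head?_append, h]

namespace PDA

variable {Q A Γ : Type}

inductive Reach (M : PDA Q A Γ) : Q × List Γ → List A → Q × List Γ → Prop
  | refl (c : Q × List Γ) : Reach M c [] c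
  | head {c c' c'' : Q × List Γ} {a : Option A} {w : List A} :
      M.Step c a c' → Reach M c' w c'' → Reach M c (a.toList ++ w) c''

variable {M : PDA Q A Γ}

namespace Reach

theorem single {c c' : Q × List Γ} {a : Option A} (h : M.Step c a c') :
    M.Reach c a.toList c' := by
  simpa using head h (refl c')

theorem trans {c₁ c₂ c₃ : Q × List Γ} {u v : List A} (h₁ : M.Reach c₁ u c₂)
    (h₂ : M.Reach c₂ v c₃) : M.Reach c₁ (u ++ v) c₃ := by
  induction h₁ with
  | refl => exact h₂
  | head hs _ ih => simpa only [List.append_assoc] using head hs (ih h₂)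

theorem iterate {f : ℕ → Q × List Γ} {v : List A} (h : ∀ n, M.Reach (f n) v (f (n + 1)))
    (n : ℕ) : M.Reach (f 0) (wpow v n) (f n) := by
  induction n with
  | zero => exact refl _
  | succ n ih => simpa only [wpow_succ] using ih.trans (h n)

theorem iterate_rev {f : ℕ → Q × List Γ} {v : List A} (h : ∀ n, M.Reach (f (n + 1)) v (f n))
    (n : ℕ) : M.Reach (f n) (wpow v n) (f 0) := by
  induction n with
  | zero => exact refl _
  | succ n ih => simpa only [wpow_succ'] using (h n).trans ih

end Reach

def Run.cons {m : ℕ} (c : Q × List Γ) (a : Option A) (r : M.Run m)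
    (h : M.Step c a (r.conf 0)) : M.Run (m + 1) where
  conf := fun | 0 => c | t + 1 => r.conf t
  label := fun | 0 => a | t + 1 => r.label t
  ok := fun
    | 0, _ => h
    | t + 1, ht => r.ok t (by omega)

theorem Run.read_cons {m : ℕ} (c : Q × List Γ) (a : Option A) (r : M.Run m)
    (h : M.Step c a (r.conf 0)) : (r.cons c a h).read 0 (m + 1) = a.toList ++ r.read 0 m := by
  simp only [Run.read, Nat.sub_zero, List.range'_succ, List.map_cons]
  rw [← List.singleton_append, List.reduceOption_append, List.reduceOption_singleton,
    List.range'_eq_map_range, List.range'_eq_map_range, List.map_map, List.map_map]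
  simp [Function.comp_def, Nat.add_comm 1, Run.cons]

theorem Reach.exists_run {c c' : Q × List Γ} {w : List A} (h : M.Reach c w c') :
    ∃ m, ∃ r : M.Run m, r.conf 0 = c ∧ r.conf m = c' ∧ r.read 0 m = w := by
  induction h with
  | refl c => exact ⟨0, ⟨fun _ => c, fun _ => none, fun _ h => absurd h (Nat.not_lt_zero _)⟩,
      rfl, rfl, by simp [Run.read]⟩
  | @head c _ _ a _ hs _ ih =>
    obtain ⟨m, r, h0, hm, hw⟩ := ih
    exact ⟨m + 1, r.cons c a (h0 ▸ hs), rfl, hm, by rw [Run.read_cons, hw]⟩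

theorem accepts_of_reach {w : List A} {c : Q × List Γ}
    (h : M.Reach (M.init, [M.startSym]) w c) (hc : c.1 ∈ M.final) : M.Accepts w := by
  obtain ⟨m, r, h0, hm, hw⟩ := h.exists_run
  exact ⟨m, r, h0, hm ▸ hc, hw⟩

variable {m : ℕ} (r : M.Run m)

theorem Run.read_self (a : ℕ) : r.read a a = [] := by
  simp [Run.read]

theorem Run.read_succ {a b : ℕ} (hab : a ≤ b) :
    r.read a (b + 1) = r.read a b ++ (r.label b).toList := by
  rw [Run.read, Nat.sub_add_comm hab, List.range'_1_concat, Nat.add_sub_cancel' hab,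
    List.map_append, List.reduceOption_append, List.map_singleton, List.reduceOption_singleton]
  rfl

theorem Run.reach {a b : ℕ} (hab : a ≤ b) (hbm : b ≤ m) :
    M.Reach (r.conf a) (r.read a b) (r.conf b) := by
  induction b, hab using Nat.le_induction with
  | base => simpa only [r.read_self] using Reach.refl _
  | succ b hab ih =>
    rw [r.read_succ hab]
    exact (ih (by omega)).trans (Reach.single (r.ok b (by omega)))

theorem Step.length_eq (hnf : M.NormalForm) {c c' : Q × List Γ} {a : Option A}
    (h : M.Step c a c') : c'.2.length = c.2.length + 1 ∨ c'.2.length + 1 = c.2.length := by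
  obtain ⟨Z, rest, ρ, hc, hρ, hc'⟩ := h
  rcases hnf _ _ _ _ _ hρ with rfl | ⟨Y, rfl⟩
  · right; simp [hc, hc']
  · left; simp [hc, hc']

theorem Step.isSuffix (hnf : M.NormalForm) {c c' : Q × List Γ} {a : Option A} {β : List Γ}
    (h : M.Step c a c') (hβ : β <:+ c.2) (hlen : β.length ≤ c'.2.length) : β <:+ c'.2 := by
  obtain ⟨Z, rest, ρ, hc, hρ, hc'⟩ := h
  rw [hc] at hβ
  rw [hc'] at hlen ⊢
  rcases hnf _ _ _ _ _ hρ with rfl | ⟨Y, rfl⟩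
  · rcases List.suffix_cons_iff.mp hβ with rfl | hβ
    · simp at hlen
    · exact hβ
  · exact hβ.trans (List.suffix_cons Y _)

theorem Step.replace_bottom {q q' : Q} {a : Option A} {τ τ' β β' : List Γ}
    (h : M.Step (q, τ ++ β) a (q', τ' ++ β)) (hhead : β'.head? = β.head?) :
    M.Step (q, τ ++ β') a (q', τ' ++ β') := by
  obtain ⟨Z, rest, ρ, hc, hρ, hc'⟩ := h
  cases τ with
  | cons Z₀ τ₀ =>
    obtain ⟨rfl, rfl⟩ := List.cons_eq_cons.mp hc
    have hτ' : τ' = ρ ++ τ₀ := List.append_cancel_right (by simpa using hc')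
    exact ⟨Z₀, τ₀ ++ β', ρ, rfl, hρ, by simp [hτ']⟩
  | nil =>
    subst hc
    have hρ' : ρ = τ' ++ [Z] := (List.append_cancel_right (by simpa using hc')).symm
    obtain ⟨rest', rfl⟩ : ∃ rest', β' = Z :: rest' := by
      cases β' with
      | nil => simp at hhead
      | cons Z' rest' => exact ⟨rest', by simpa using hhead⟩
    exact ⟨Z, rest', ρ, rfl, hρ, by simp [hρ']⟩

theorem Run.s_succ (hnf : M.NormalForm) {t : ℕ} (ht : t < m) :
    r.s (t + 1) = r.s t + 1 ∨ r.s (t + 1) + 1 = r.s t :=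
  (r.ok t ht).length_eq hnf

theorem Run.exists_s_eq (hnf : M.NormalForm) {a b v : ℕ} (hab : a ≤ b) (hbm : b ≤ m)
    (hv : r.s a ≤ v ∧ v ≤ r.s b ∨ r.s b ≤ v ∧ v ≤ r.s a) : ∃ t, a ≤ t ∧ t ≤ b ∧ r.s t = v := by
  induction b, hab using Nat.le_induction with
  | base => exact ⟨a, le_rfl, le_rfl, by omega⟩
  | succ b hab ih =>
    by_cases hv' : r.s a ≤ v ∧ v ≤ r.s b ∨ r.s b ≤ v ∧ v ≤ r.s a
    · obtain ⟨t, hat, htb, ht⟩ := ih (by omega) hv'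
      exact ⟨t, hat, by omega, ht⟩
    · have := r.s_succ hnf (t := b) (by omega)
      exact ⟨b + 1, by omega, le_rfl, by omega⟩

theorem Run.isSuffix_conf (hnf : M.NormalForm) {a b : ℕ} {β : List Γ} (hab : a ≤ b)
    (hbm : b ≤ m) (hβ : β <:+ (r.conf a).2) (hs : ∀ t, a ≤ t → t ≤ b → β.length ≤ r.s t) :
    β <:+ (r.conf b).2 := by
  induction b, hab using Nat.le_induction with
  | base => exact hβ
  | succ b hab ih =>
    exact (r.ok b (by omega)).isSuffix hnf (ih (by omega) fun t h₁ h₂ => hs t h₁ (by omega))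
      (hs (b + 1) (by omega) le_rfl)

theorem Run.reach_replace_bottom (hnf : M.NormalForm) {a b : ℕ} {q q' : Q}
    {τ τ' β β' : List Γ} (hab : a ≤ b) (hbm : b ≤ m)
    (hs : ∀ t, a ≤ t → t ≤ b → β.length ≤ r.s t)
    (ha : r.conf a = (q, τ ++ β)) (hb : r.conf b = (q', τ' ++ β)) (hhead : β'.head? = β.head?) :
    M.Reach (q, τ ++ β') (r.read a b) (q', τ' ++ β') := by
  suffices key : ∀ t, a ≤ t → t ≤ b → ∀ σ, (r.conf t).2 = σ ++ β →
      M.Reach (q, τ ++ β') (r.read a t) ((r.conf t).1, σ ++ β') by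
    simpa [hb] using key b hab le_rfl τ' (by simp [hb])
  intro t hat
  induction t, hat using Nat.le_induction with
  | base =>
    intro _ σ hσ
    obtain rfl : σ = τ := by simpa [ha] using hσ.symm
    simpa [ha, r.read_self] using Reach.refl _
  | succ t hat ih =>
    intro htb σ hσ
    obtain ⟨σ₀, hσ₀⟩ : β <:+ (r.conf t).2 :=
      r.isSuffix_conf hnf hat (by omega) (by simp [ha]) fun t' h₁ h₂ => hs t' h₁ (by omega)
    have hstep : M.Step ((r.conf t).1, σ₀ ++ β) (r.label t) ((r.conf (t + 1)).1, σ ++ β) := by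
      simpa [hσ₀, ← hσ] using r.ok t (by omega)
    rw [r.read_succ hat]
    exact (ih (by omega) σ₀ hσ₀.symm).trans (Reach.single (hstep.replace_bottom hhead))

theorem Run.exists_stack_eq_append (hnf : M.NormalForm) {a b c d : ℕ} (hab : a ≤ b) (hbc : b ≤ c)
    (hcd : c ≤ d) (hdm : d ≤ m) (hAB : ∀ t, a ≤ t → t ≤ b → r.s a ≤ r.s t)
    (hBC : ∀ t, b ≤ t → t ≤ c → r.s b ≤ r.s t) (hCD : ∀ t, c ≤ t → t ≤ d → r.s d ≤ r.s t)
    (hsc : r.s c = r.s b) (hsd : r.s d = r.s a) :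
    ∃ δ, (r.conf b).2 = δ ++ (r.conf a).2 ∧ (r.conf c).2 = δ ++ (r.conf a).2 ∧
      (r.conf d).2 = (r.conf a).2 := by
  obtain ⟨δ, hb⟩ :=
    r.isSuffix_conf hnf hab (hbc.trans (hcd.trans hdm)) (List.suffix_refl _) hAB
  have hc : (r.conf c).2 = (r.conf b).2 :=
    ((r.isSuffix_conf hnf hbc (hcd.trans hdm) (List.suffix_refl _) hBC).eq_of_length
      hsc.symm).symm
  have hd : (r.conf a).2 <:+ (r.conf d).2 :=
    r.isSuffix_conf hnf hcd hdm (hc ▸ ⟨δ, hb⟩) fun t h₁ h₂ => hsd.symm.trans_le (hCD t h₁ h₂)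
  exact ⟨δ, hb.symm, hc.trans hb.symm, (hd.eq_of_length hsd.symm).symm⟩

theorem Run.accepts_pump (hnf : M.NormalForm) {w : List A} (hacc : r.Accepting w)
    {a b c d : ℕ} (hab : a ≤ b) (hbc : b ≤ c) (hcd : c ≤ d) (hdm : d ≤ m)
    (hAB : ∀ t, a ≤ t → t ≤ b → r.s a ≤ r.s t) (hBC : ∀ t, b ≤ t → t ≤ c → r.s b ≤ r.s t)
    (hCD : ∀ t, c ≤ t → t ≤ d → r.s d ≤ r.s t) (hsc : r.s c = r.s b) (hsd : r.s d = r.s a)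
    (hq : (r.conf a).1 = (r.conf b).1) (hhead : (r.conf a).2.head? = (r.conf b).2.head?)
    (hp : (r.conf c).1 = (r.conf d).1) (n : ℕ) :
    M.Accepts (r.read 0 a ++ wpow (r.read a b) n ++ r.read b c ++ wpow (r.read c d) n ++
      r.read d m) := by
  obtain ⟨δ, hb, hc, hd⟩ := r.exists_stack_eq_append hnf hab hbc hcd hdm hAB hBC hCD hsc hsd
  set α := (r.conf a).2
  set q := (r.conf a).1
  set p := (r.conf d).1
  have hδα : (δ ++ α).head? = α.head? := hb ▸ hhead.symm
  have ha' : r.conf a = (q, [] ++ α) := rfl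
  have hb' : r.conf b = (q, δ ++ α) := Prod.ext hq.symm hb
  have hc' : r.conf c = (p, [] ++ (δ ++ α)) := Prod.ext hp hc
  have hd' : r.conf d = (p, [] ++ α) := Prod.ext rfl hd
  have pre : M.Reach (M.init, [M.startSym]) (r.read 0 a) (q, α) :=
    hacc.1 ▸ r.reach (Nat.zero_le a) (hab.trans (hbc.trans (hcd.trans hdm)))
  have up (k : ℕ) : M.Reach (q, wpow δ k ++ α) (r.read a b) (q, wpow δ (k + 1) ++ α) := by
    simpa [wpow_succ'] using r.reach_replace_bottom hnf hab (hbc.trans (hcd.trans hdm)) hAB ha'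
      hb' (head?_wpow_append hδα k)
  have mid : M.Reach (q, wpow δ n ++ α) (r.read b c) (p, wpow δ n ++ α) := by
    simpa using r.reach_replace_bottom hnf hbc (hcd.trans hdm) (τ := []) (β := δ ++ α)
      (fun t h₁ h₂ => by rw [← hb]; exact hBC t h₁ h₂) hb' hc'
      (by rw [head?_wpow_append hδα, hδα])
  have down (k : ℕ) : M.Reach (p, wpow δ (k + 1) ++ α) (r.read c d) (p, wpow δ k ++ α) := by
    simpa [wpow_succ'] using r.reach_replace_bottom hnf hcd hdm
      (fun t h₁ h₂ => hsd.symm.trans_le (hCD t h₁ h₂)) hc' hd' (head?_wpow_append hδα k)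
  have post : M.Reach (p, α) (r.read d m) (r.conf m) := by
    simpa [hd'] using r.reach hdm le_rfl
  refine accepts_of_reach ?_ hacc.2.1
  simpa [wpow_zero, List.append_assoc] using pre.trans <| (Reach.iterate (f :=
    fun k => (q, wpow δ k ++ α)) up n).trans <| mid.trans <| (Reach.iterate_rev (f :=
    fun k => (p, wpow δ k ++ α)) down n).trans post

theorem Run.le_lp_s9 {j h t : ℕ} (htj : t ≤ j) (hs : r.s t = h) : t ≤ r.lp j h :=
  le_csSup ⟨j, fun _ hy => hy.1⟩ ⟨htj, hs⟩

theorem Run.fp_le_s9 {j h t : ℕ} (hjt : j ≤ t) (hs : r.s t = h) : r.fp j h ≤ t :=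
  Nat.sInf_le ⟨hjt, hs⟩

theorem Run.le_s_of_lp_le_of_le_fp (hnf : M.NormalForm) {j h t : ℕ} (hjm : j ≤ m)
    (hfm : r.fp j h ≤ m) (hh : h ≤ r.s j) (h₁ : r.lp j h ≤ t) (h₂ : t ≤ r.fp j h) :
    h ≤ r.s t := by
  by_contra! hlt
  rcases le_total t j with htj | hjt
  · obtain ⟨t', htt', ht'j, hs⟩ := r.exists_s_eq hnf htj hjm (Or.inl ⟨hlt.le, hh⟩)
    obtain rfl : t' = t := le_antisymm ((r.le_lp_s9 ht'j hs).trans h₁) htt'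
    omega
  · obtain ⟨t', hjt', ht't, hs⟩ := r.exists_s_eq hnf hjt (h₂.trans hfm) (Or.inr ⟨hlt.le, hh⟩)
    obtain rfl : t' = t := le_antisymm ht't (h₂.trans (r.fp_le_s9 hjt' hs))
    omega

theorem Run.lp_le_lp (hnf : M.NormalForm) {j g h : ℕ} (hjm : j ≤ m) (hgh : g ≤ h)
    (hh : h ≤ r.s j) (hg : r.lp j g ≤ j ∧ r.s (r.lp j g) = g) : r.lp j g ≤ r.lp j h := by
  obtain ⟨t, hat, htj, hs⟩ := r.exists_s_eq hnf hg.1 hjm (Or.inl ⟨hg.2.le.trans hgh, hh⟩)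
  exact hat.trans (r.le_lp_s9 htj hs)

theorem Run.fp_le_fp (hnf : M.NormalForm) {j g h : ℕ} (hgh : g ≤ h) (hh : h ≤ r.s j)
    (hg : j ≤ r.fp j g ∧ r.fp j g ≤ m ∧ r.s (r.fp j g) = g) : r.fp j h ≤ r.fp j g := by
  obtain ⟨t, hjt, htd, hs⟩ := r.exists_s_eq hnf hg.1 hg.2.1 (Or.inr ⟨hg.2.2.le.trans hgh, hh⟩)
  exact (r.fp_le_s9 hjt hs).trans htd

variable {r}

theorem Run.IsLevel.lp_spec (hnf : M.NormalForm) {N i j k e : ℕ} (hlev : r.IsLevel N i j k)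
    (h₁ : r.s i ≤ e) (h₂ : e ≤ r.s j) : r.lp j e ≤ j ∧ r.s (r.lp j e) = e := by
  obtain ⟨hij, hjk, hkm, -⟩ := hlev
  obtain ⟨t, -, htj, hs⟩ := r.exists_s_eq hnf hij.le (by omega) (Or.inl ⟨h₁, h₂⟩)
  exact Nat.sSup_mem (s := {y | y ≤ j ∧ r.s y = e}) ⟨t, htj, hs⟩ ⟨j, fun _ hy => hy.1⟩

theorem Run.IsLevel.fp_spec (hnf : M.NormalForm) {N i j k e : ℕ} (hlev : r.IsLevel N i j k)
    (h₁ : r.s i ≤ e) (h₂ : e ≤ r.s j) : j ≤ r.fp j e ∧ r.fp j e ≤ m ∧ r.s (r.fp j e) = e := by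
  obtain ⟨-, hjk, hkm, hik, -⟩ := hlev
  obtain ⟨t, hjt, htk, hs⟩ := r.exists_s_eq hnf hjk.le hkm (Or.inr ⟨hik ▸ h₁, h₂⟩)
  obtain ⟨hjfp, hsfp⟩ := Nat.sInf_mem (s := {y | j ≤ y ∧ r.s y = e}) ⟨t, hjt, hs⟩
  exact ⟨hjfp, (r.fp_le_s9 hjt hs).trans (htk.trans hkm), hsfp⟩

end PDA

/-- Case 2 pumping: if an accepting run has an `N`-level `(i, j, k)` with two stack
sizes `g < h` having equal full states, then factoring the word at positions
`lp(g), lp(h), fp(h), fp(g)` allows matched pumping. -/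
theorem case2_pumping {Q A Γ : Type} {M : PDA Q A Γ} {m : ℕ}
    (hnf : M.NormalForm) (r : M.Run m) (w : List A) (hacc : r.Accepting w)
    {N i j k : ℕ} (hlev : r.IsLevel N i j k)
    {g h : ℕ} (hgl : r.s i ≤ g) (hgh : g < h) (hhu : h ≤ r.s j)
    (hfs : r.fullState j g = r.fullState j h)
    (u v x y z : List A)
    (hu : u = r.read 0 (r.lp j g)) (hv : v = r.read (r.lp j g) (r.lp j h))
    (hx : x = r.read (r.lp j h) (r.fp j h)) (hy : y = r.read (r.fp j h) (r.fp j g))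
    (hz : z = r.read (r.fp j g) m) :
    ∀ n : ℕ, M.Accepts (u ++ wpow v n ++ x ++ wpow y n ++ z) := by
  simp only [PDA.Run.fullState, Prod.mk.injEq] at hfs
  obtain ⟨hq, hhead, hp⟩ := hfs
  have hjm : j ≤ m := by obtain ⟨-, hjk, hkm, -⟩ := hlev; omega
  have hlpg := hlev.lp_spec hnf hgl (by omega)
  have hlph := hlev.lp_spec hnf (by omega) hhu
  have hfpg := hlev.fp_spec hnf hgl (by omega)
  have hfph := hlev.fp_spec hnf (by omega) hhu
  have hab := r.lp_le_lp hnf hjm hgh.le hhu hlpg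
  have hcd := r.fp_le_fp hnf hgh.le hhu hfpg
  subst hu hv hx hy hz
  exact r.accepts_pump hnf hacc hab (hlph.1.trans hfph.1) hcd hfpg.2.1
    (fun t h₁ _ => hlpg.2.trans_le
      (r.le_s_of_lp_le_of_le_fp hnf hjm hfpg.2.1 (by omega) h₁ (by omega)))
    (fun t h₁ h₂ => hlph.2.trans_le (r.le_s_of_lp_le_of_le_fp hnf hjm hfph.2.1 hhu h₁ h₂))
    (fun t _ h₂ => hfpg.2.2.trans_le
      (r.le_s_of_lp_le_of_le_fp hnf hjm hfpg.2.1 (by omega) (by omega) h₂))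
    (by rw [hfph.2.2, hlph.2]) (by rw [hfpg.2.2, hlpg.2]) hq hhead hp.symm
end

section
/- Let π be a run of a pushdown automaton with stack sizes s_0, …, s_m. If there exist positions a < b with s_b − s_a = N, s_n ≥ s_a for all a ≤ n ≤ b, and a later position c > b with s_c = s_a and s_n ≥ s_a for b ≤ n ≤ c, then π has level at least N, i.e., π contains an N'-level for some N' ≥ N. -/
/-- If the stack grows by `N` between `a` and `b` while staying at least `s a`, and
later returns to `s a` at `c` while staying at least `s a`, then the run has an
`N'`-level for some `N' ≥ N`. -/
theorem level_of_excursion {Q A Γ : Type} {M : PDA Q A Γ} {m : ℕ}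
    (r : M.Run m) {a b c N : ℕ} (hab : a < b) (hbc : b < c) (hcm : c ≤ m)
    (hN : r.s b = r.s a + N)
    (h1 : ∀ n, a ≤ n → n ≤ b → r.s a ≤ r.s n)
    (hc : r.s c = r.s a)
    (h2 : ∀ n, b ≤ n → n ≤ c → r.s a ≤ r.s n) :
    ∃ N' : ℕ, N ≤ N' ∧ r.HasLevel N' := by
  have hac : ∀ n, a ≤ n → n ≤ c → r.s a ≤ r.s n := by
    intro n hn1 hn2
    rcases le_or_gt n b with h | h
    · exact h1 n hn1 h
    · exact h2 n h.le hn2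
  obtain ⟨j, hjmem, hjmax⟩ := Finset.exists_max_image (Finset.Icc a c) r.s
    ⟨a, Finset.mem_Icc.mpr ⟨le_refl a, by omega⟩⟩
  rw [Finset.mem_Icc] at hjmem
  have hmax : ∀ n, a ≤ n → n ≤ c → r.s n ≤ r.s j := fun n hn1 hn2 =>
    hjmax n (Finset.mem_Icc.mpr ⟨hn1, hn2⟩)
  by_cases hS : r.s j = r.s a
  · have hall : ∀ n, a ≤ n → n ≤ c → r.s n = r.s a := fun n hn1 hn2 =>
      le_antisymm (hS ▸ hmax n hn1 hn2) (hac n hn1 hn2)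
    have hb := hall b hab.le hbc.le
    refine ⟨0, by omega, a, b, c, hab, hbc, hcm, hc ▸ rfl, by omega, ?_, ?_⟩
    · intro n hn1 hn2
      have := hall n hn1 (hn2.trans hbc.le)
      omega
    · intro n hn1 hn2
      have := hall n (hab.le.trans hn1) hn2
      omega
  · have hSa : r.s a < r.s j := lt_of_le_of_ne (hmax a le_rfl (by omega)) (Ne.symm hS)
    have hja : a < j := by
      rcases lt_or_eq_of_le hjmem.1 with h | h
      · exact h
      · subst h; omega
    have hjc : j < c := by
      rcases lt_or_eq_of_le hjmem.2 with h | h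
      · exact h
      · rw [h, hc] at hSa; omega
    have hbj : r.s b ≤ r.s j := hmax b hab.le hbc.le
    refine ⟨r.s j - r.s a, by omega, a, j, c, hja, hjc, hcm, hc.symm, by omega, ?_, ?_⟩
    · intro n hn1 hn2
      exact ⟨hac n hn1 (hn2.trans hjmem.2), hmax n hn1 (hn2.trans hjmem.2)⟩
    · intro n hn1 hn2
      have := hac n (hjmem.1.trans hn1) hn2
      have := hmax n (hjmem.1.trans hn1) hn2
      omega
end
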